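/- Let G' be a finite bipartite graph with parts X, Y and nonnegative vertex weights w with w(X) = w(Y) = 1/2, such that every A ⊆ X satisfies w(A) ≤ w(N(A)) and every B ⊆ Y satisfies w(B) ≤ w(N(B)). Then there exists a fractional perfect matching: a function f : E(G') → [0,∞) with ∑_{e ∋ x} f(e) = w(x) for every vertex x of G'. -/

import Mathlib

open Finset Filter

/-- `I` is an independent set of vertices in `G`. -/
def IsIndepSet {V : Type*} (G : SimpleGraph V) (I : Finset V) : Prop :=
  ∀ u ∈ I, ∀ v ∈ I, ¬ G.Adj u v

/-- The neighborhood `N(I)`: vertices adjacent to at least one vertex of `I`. -/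
noncomputable def nbhd {V : Type*} [Fintype V] (G : SimpleGraph V) (I : Finset V) : Finset V :=
  @Finset.filter _ (fun v => ∃ u ∈ I, G.Adj u v) (Classical.decPred _) Finset.univ

/-- Measure of a finite set of vertices: sum of the weights. -/
def fmeas {V : Type*} (μ : V → ℝ) (S : Finset V) : ℝ := ∑ v ∈ S, μ v

/-- The `n`-fold tensor (categorical) power of `G`. -/
def tpow {V : Type*} (G : SimpleGraph V) (n : ℕ) : SimpleGraph (Fin n → V) where
  Adj u v := u ≠ v ∧ ∀ i, G.Adj (u i) (v i)
  symm := ⟨fun u v h => ⟨h.1.symm, fun i => (h.2 i).symm⟩⟩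
  loopless := ⟨fun u h => h.1 rfl⟩

/-- Product measure of a set of `n`-tuples. -/
noncomputable def pmeas {V : Type*} (μ : V → ℝ) (n : ℕ) (S : Finset (Fin n → V)) : ℝ :=
  ∑ x ∈ S, ∏ i, μ (x i)

/-- `ᾱ(G)`: the supremum (= maximum) of the measures of independent sets of `G`. -/
noncomputable def alphaBar {V : Type*} (G : SimpleGraph V) (μ : V → ℝ) : ℝ :=
  sSup {x : ℝ | ∃ I : Finset V, IsIndepSet G I ∧ x = fmeas μ I}

/-- `ᾱ(G^n)` with the product measure. -/
noncomputable def alphaPow {V : Type*} (G : SimpleGraph V) (μ : V → ℝ) (n : ℕ) : ℝ :=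
  alphaBar (tpow G n) (fun x => ∏ i, μ (x i))

/-
Among the nonnegative symmetric edge weightings `f` of `G'` with degrees `∑ v, f u v ≤ w u`
(a compact set), pick one maximising the total degree of `X`. If some `x₀ ∈ X` were unsaturated,
consider the vertices reachable from `x₀` by alternating paths: along any edge from `X` to `Y`,
back from `Y` to `X` along edges of positive weight. Pushing weight along such a path to an
unsaturated `y` would increase the objective, so every reachable `y` is saturated. For the
reachable sets `A ⊆ X` and `B ⊆ Y` this gives `N(A) ⊆ B`, and all weight at `B` goes to `A`, so
`w(B) = ∑_{x ∈ A} deg x < w(A) ≤ w(N(A)) ≤ w(B)`. Hence `X` is saturated, and since the degrees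
summed over `X` and over `Y` agree and `w(X) = w(Y)`, so is `Y`.
-/

open Topology

lemma mem_nbhd {V : Type*} [Fintype V] {G : SimpleGraph V} {I : Finset V} {v : V} :
    v ∈ nbhd G I ↔ ∃ u ∈ I, G.Adj u v := by
  simp [nbhd]

lemma eventually_le_add_mul {a b r : ℝ} (h : a < b ∨ a ≤ b ∧ 0 ≤ r) :
    ∀ᶠ ε in 𝓝[>] (0 : ℝ), a ≤ b + ε * r := by
  rcases h with hab | ⟨hab, hr⟩
  · have hlim : Tendsto (fun ε => b + ε * r) (𝓝[>] 0) (𝓝 b) :=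
      ((continuous_const.add (continuous_id.mul continuous_const)).tendsto' 0 b
        (by simp)).mono_left nhdsWithin_le_nhds
    filter_upwards [hlim.eventually_const_lt hab] with ε hε using hε.le
  · filter_upwards [self_mem_nhdsWithin] with ε (hε : 0 < ε)
    exact le_add_of_le_of_nonneg hab (mul_nonneg hε.le hr)

namespace SimpleGraph

variable {V : Type*} (G : SimpleGraph V)

def edgeWeights : Submodule ℝ (V → V → ℝ) where
  carrier := {c | (∀ u v, c u v = c v u) ∧ ∀ u v, ¬G.Adj u v → c u v = 0}
  add_mem' {c d} hc hd := ⟨fun u v => by simp [hc.1 u v, hd.1 u v],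
    fun u v h => by simp [hc.2 u v h, hd.2 u v h]⟩
  zero_mem' := ⟨fun _ _ => rfl, fun _ _ _ => rfl⟩
  smul_mem' a c hc := ⟨fun u v => by simp [hc.1 u v], fun u v h => by simp [hc.2 u v h]⟩

/-- For `0 ≤ f` these are the directions `c` with `0 ≤ f + ε • c` for all small `ε > 0`. -/
def IsFeasibleDir (f c : V → V → ℝ) : Prop :=
  c ∈ G.edgeWeights ∧ ∀ u v, f u v = 0 → 0 ≤ c u v

variable {G}

lemma adj_of_mem_edgeWeights {f : V → V → ℝ} (hf : f ∈ G.edgeWeights) {u v : V}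
    (h : f u v ≠ 0) : G.Adj u v := by
  by_contra hadj
  exact h (hf.2 u v hadj)

lemma isFeasibleDir_zero (f : V → V → ℝ) : G.IsFeasibleDir f 0 :=
  ⟨G.edgeWeights.zero_mem, fun _ _ _ => le_rfl⟩

lemma IsFeasibleDir.add {f c d : V → V → ℝ} (hc : G.IsFeasibleDir f c)
    (hd : G.IsFeasibleDir f d) : G.IsFeasibleDir f (c + d) :=
  ⟨G.edgeWeights.add_mem hc.1 hd.1, fun u v h => add_nonneg (hc.2 u v h) (hd.2 u v h)⟩

section edgeIndicator

variable [DecidableEq V]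

def edgeIndicator (x y : V) : V → V → ℝ := fun u v => if s(u, v) = s(x, y) then 1 else 0

lemma edgeIndicator_mem_edgeWeights {x y : V} (h : G.Adj x y) :
    edgeIndicator x y ∈ G.edgeWeights := by
  refine ⟨fun u v => by simp only [edgeIndicator, Sym2.eq_swap], fun u v huv => ?_⟩
  have : s(u, v) ≠ s(x, y) := fun e => huv (by rwa [← G.mem_edgeSet, e, G.mem_edgeSet])
  simp [edgeIndicator, this]

lemma isFeasibleDir_edgeIndicator (f : V → V → ℝ) {x y : V} (h : G.Adj x y) :
    G.IsFeasibleDir f (edgeIndicator x y) :=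
  ⟨edgeIndicator_mem_edgeWeights h, fun u v _ => by unfold edgeIndicator; split_ifs <;> norm_num⟩

lemma isFeasibleDir_neg_edgeIndicator {f : V → V → ℝ} (hf : f ∈ G.edgeWeights) {x y : V}
    (h : f x y ≠ 0) : G.IsFeasibleDir f (-edgeIndicator x y) := by
  refine ⟨G.edgeWeights.neg_mem (edgeIndicator_mem_edgeWeights (adj_of_mem_edgeWeights hf h)),
    fun u v huv => ?_⟩
  have : s(u, v) ≠ s(x, y) := by
    rw [Ne, Sym2.eq_iff]
    rintro (⟨rfl, rfl⟩ | ⟨rfl, rfl⟩)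
    exacts [h huv, h (hf.1 v u ▸ huv)]
  simp [edgeIndicator, this]

end edgeIndicator

variable [Fintype V]

def rowSum : (V → V → ℝ) →ₗ[ℝ] V → ℝ where
  toFun f u := ∑ v, f u v
  map_add' f g := by ext u; simp [Finset.sum_add_distrib]
  map_smul' a f := by ext u; simp [Finset.mul_sum]

@[simp]
lemma rowSum_apply (f : V → V → ℝ) (u : V) : rowSum f u = ∑ v, f u v := rfl

lemma rowSum_edgeIndicator [DecidableEq V] {x y : V} (h : x ≠ y) :
    rowSum (edgeIndicator x y) = Pi.single x 1 + Pi.single y 1 := by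
  ext u
  by_cases hx : u = x <;> by_cases hy : u = y <;> simp_all [edgeIndicator]

variable (G) in
def fractionalSubmatchings (w : V → ℝ) : Set (V → V → ℝ) :=
  {f | f ∈ G.edgeWeights ∧ 0 ≤ f ∧ rowSum f ≤ w}

variable (G) in
lemma isCompact_fractionalSubmatchings (w : V → ℝ) :
    IsCompact (G.fractionalSubmatchings w) := by
  have hbdd : G.fractionalSubmatchings w ⊆ Set.Icc 0 fun u _ => w u := by
    rintro f ⟨-, hf0, hfw⟩
    exact ⟨hf0, fun u v => (Finset.single_le_sum (fun v _ => hf0 u v) (Finset.mem_univ v)).trans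
      (hfw u)⟩
  have hclosed : IsClosed (G.fractionalSubmatchings w) :=
    G.edgeWeights.closed_of_finiteDimensional.inter <|
      (isClosed_le continuous_const continuous_id).inter <|
        isClosed_le (rowSum (V := V)).continuous_of_finiteDimensional continuous_const
  exact isCompact_Icc.of_isClosed_subset hclosed hbdd

lemma exists_add_smul_mem_fractionalSubmatchings {w : V → ℝ} {f c : V → V → ℝ}
    (hf : f ∈ G.fractionalSubmatchings w) (hc : G.IsFeasibleDir f c)
    (hslack : ∀ v, 0 < rowSum c v → rowSum f v < w v) :
    ∃ ε > (0 : ℝ), f + ε • c ∈ G.fractionalSubmatchings w := by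
  obtain ⟨hfE, hf0, hfw⟩ := hf
  have hnonneg : ∀ᶠ ε in 𝓝[>] (0 : ℝ), ∀ u v, 0 ≤ f u v + ε * c u v := by
    simp only [eventually_all]
    exact fun u v => eventually_le_add_mul <|
      (hf0 u v).lt_or_eq.imp_right fun h => ⟨h.le, hc.2 u v h.symm⟩
  have hrow : ∀ᶠ ε in 𝓝[>] (0 : ℝ), ∀ v, rowSum f v + ε * rowSum c v ≤ w v := by
    refine eventually_all.2 fun v => ?_
    have hcases : rowSum f v < w v ∨ rowSum f v ≤ w v ∧ 0 ≤ -rowSum c v :=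
      (lt_or_ge 0 (rowSum c v)).imp (hslack v) fun h => ⟨hfw v, neg_nonneg.2 h⟩
    filter_upwards [eventually_le_add_mul hcases] with ε hε
    linarith
  obtain ⟨ε, ⟨hε0, hεw⟩, hε⟩ := ((hnonneg.and hrow).and self_mem_nhdsWithin).exists
  refine ⟨ε, hε, G.edgeWeights.add_mem hfE (G.edgeWeights.smul_mem ε hc.1), fun u v => hε0 u v,
    fun v => ?_⟩
  simpa [Finset.sum_add_distrib, Finset.mul_sum] using hεw v

lemma sum_rowSum_eq_sum_rowSum {f : V → V → ℝ} (hsymm : ∀ u v, f u v = f v u) {A B : Finset V}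
    (hA : ∀ x ∈ A, ∀ y, f x y ≠ 0 → y ∈ B) (hB : ∀ y ∈ B, ∀ x, f y x ≠ 0 → x ∈ A) :
    ∑ x ∈ A, rowSum f x = ∑ y ∈ B, rowSum f y := by
  calc ∑ x ∈ A, rowSum f x = ∑ x ∈ A, ∑ y ∈ B, f x y := by
        refine Finset.sum_congr rfl fun x hx => ?_
        exact (Finset.sum_subset (Finset.subset_univ B) fun y _ hy =>
          by_contra fun h => hy (hA x hx y h)).symm
    _ = ∑ y ∈ B, ∑ x ∈ A, f y x := by
        rw [Finset.sum_comm]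
        exact Finset.sum_congr rfl fun y _ => Finset.sum_congr rfl fun x _ => hsymm x y
    _ = ∑ y ∈ B, rowSum f y := by
        refine Finset.sum_congr rfl fun y hy => ?_
        exact Finset.sum_subset (Finset.subset_univ A) fun x _ hx =>
          by_contra fun h => hx (hB y hy x h)

section AltReach

variable [DecidableEq V]

variable (G) in
/-- Reachability from `x₀` by alternating paths, along arbitrary edges and edges of nonzero weight
in turn, witnessed by the signed sum of the edge indicators along the path: a feasible direction
with row sums `e x₀ - e x` (even length, ending at `x`) or `e x₀ + e y` (odd length, ending
at `y`). -/
def AltReachEven (f : V → V → ℝ) (x₀ x : V) : Prop :=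
  ∃ c, G.IsFeasibleDir f c ∧ rowSum c = Pi.single x₀ 1 - Pi.single x 1

variable (G) in
def AltReachOdd (f : V → V → ℝ) (x₀ y : V) : Prop :=
  ∃ c, G.IsFeasibleDir f c ∧ rowSum c = Pi.single x₀ 1 + Pi.single y 1

variable {f : V → V → ℝ} {x₀ x y : V}

lemma altReachEven_self (f : V → V → ℝ) (x₀ : V) : G.AltReachEven f x₀ x₀ :=
  ⟨0, isFeasibleDir_zero f, by simp⟩

lemma AltReachEven.odd (h : G.AltReachEven f x₀ x) (hxy : G.Adj x y) : G.AltReachOdd f x₀ y := by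
  obtain ⟨c, hc, hcx⟩ := h
  refine ⟨_, hc.add (isFeasibleDir_edgeIndicator f hxy), ?_⟩
  rw [map_add, hcx, rowSum_edgeIndicator hxy.ne]
  abel

lemma AltReachOdd.even (hf : f ∈ G.edgeWeights) (h : G.AltReachOdd f x₀ y) (hyx : f y x ≠ 0) :
    G.AltReachEven f x₀ x := by
  obtain ⟨c, hc, hcy⟩ := h
  refine ⟨_, hc.add (isFeasibleDir_neg_edgeIndicator hf hyx), ?_⟩
  rw [map_add, map_neg, hcy, rowSum_edgeIndicator (adj_of_mem_edgeWeights hf hyx).ne]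
  abel

lemma AltReachOdd.rowSum_eq_of_isMaxOn {X : Finset V} {w : V → ℝ}
    (hf : f ∈ G.fractionalSubmatchings w)
    (hmax : IsMaxOn (fun g => ∑ x ∈ X, rowSum g x) (G.fractionalSubmatchings w) f)
    (hx₀ : x₀ ∈ X) (hx₀w : rowSum f x₀ < w x₀) (hy : G.AltReachOdd f x₀ y) :
    rowSum f y = w y := by
  obtain ⟨c, hc, hcy⟩ := hy
  by_contra hy
  have hslack : ∀ v, 0 < rowSum c v → rowSum f v < w v := by
    intro v hv
    by_cases hvx₀ : v = x₀
    · exact hvx₀ ▸ hx₀w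
    by_cases hvy : v = y
    · exact hvy ▸ (hf.2.2 y).lt_of_ne hy
    rw [hcy] at hv
    simp [hvx₀, hvy] at hv
  obtain ⟨ε, hε, hmem⟩ := exists_add_smul_mem_fractionalSubmatchings hf hc hslack
  -- moving along `c` raises the objective by `ε`, or by `2 * ε` if `y ∈ X`
  have hle : ∑ x ∈ X, rowSum (f + ε • c) x ≤ ∑ x ∈ X, rowSum f x := hmax hmem
  rw [map_add, map_smul, hcy] at hle
  simp only [Pi.add_apply, Pi.smul_apply, smul_eq_mul, Finset.sum_add_distrib, ← Finset.mul_sum,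
    Finset.sum_pi_single', if_pos hx₀] at hle
  split_ifs at hle <;> linarith

end AltReach

lemma rowSum_eq_of_isMaxOn {X Y : Finset V} {w : V → ℝ} (hw : 0 ≤ w)
    (hbip : ∀ u v, G.Adj u v → (u ∈ X ↔ v ∈ Y))
    (hall : ∀ A ⊆ X, fmeas w A ≤ fmeas w (nbhd G A)) {f : V → V → ℝ}
    (hf : f ∈ G.fractionalSubmatchings w)
    (hmax : IsMaxOn (fun g => ∑ x ∈ X, rowSum g x) (G.fractionalSubmatchings w) f) :
    ∀ x ∈ X, rowSum f x = w x := by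
  classical
  by_contra! ⟨x₀, hx₀, hne⟩
  have hx₀w : rowSum f x₀ < w x₀ := (hf.2.2 x₀).lt_of_ne hne
  let A := X.filter (G.AltReachEven f x₀)
  let B := Y.filter (G.AltReachOdd f x₀)
  have hforward : ∀ x ∈ A, ∀ y, G.Adj x y → y ∈ B := fun x hx y hxy =>
    have ⟨hxX, hx⟩ := Finset.mem_filter.1 hx
    Finset.mem_filter.2 ⟨(hbip x y hxy).1 hxX, hx.odd hxy⟩
  have hbackward : ∀ y ∈ B, ∀ x, f y x ≠ 0 → x ∈ A := fun y hy x hyx =>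
    have ⟨hyY, hy⟩ := Finset.mem_filter.1 hy
    Finset.mem_filter.2
      ⟨(hbip x y (adj_of_mem_edgeWeights hf.1 hyx).symm).2 hyY, hy.even hf.1 hyx⟩
  have hAB : ∑ x ∈ A, rowSum f x = ∑ y ∈ B, rowSum f y :=
    sum_rowSum_eq_sum_rowSum hf.1.1
      (fun x hx y hxy => hforward x hx y (adj_of_mem_edgeWeights hf.1 hxy)) hbackward
  have hBsat : ∀ y ∈ B, rowSum f y = w y := fun y hy =>
    (Finset.mem_filter.1 hy).2.rowSum_eq_of_isMaxOn hf hmax hx₀ hx₀w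
  have hNA : nbhd G A ⊆ B := fun y hy =>
    have ⟨x, hx, hxy⟩ := mem_nbhd.1 hy
    hforward x hx y hxy
  have : fmeas w B < fmeas w B := calc
    fmeas w B = ∑ x ∈ A, rowSum f x := by rw [hAB]; exact (Finset.sum_congr rfl hBsat).symm
    _ < fmeas w A := Finset.sum_lt_sum (fun x _ => hf.2.2 x)
      ⟨x₀, Finset.mem_filter.2 ⟨hx₀, altReachEven_self f x₀⟩, hx₀w⟩
    _ ≤ fmeas w (nbhd G A) := hall A (Finset.filter_subset _ _)
    _ ≤ fmeas w B := Finset.sum_le_sum_of_subset_of_nonneg hNA fun v _ _ => hw v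
  exact lt_irrefl _ this

end SimpleGraph

open SimpleGraph

theorem stmt_12_general {V : Type*} [Fintype V] [DecidableEq V] (G' : SimpleGraph V) (w : V → ℝ)
    (hw0 : ∀ v, 0 ≤ w v)
    (X Y : Finset V) (hXY : Disjoint X Y) (hcover : X ∪ Y = Finset.univ)
    (hbip : ∀ u v, G'.Adj u v → (u ∈ X ∧ v ∈ Y) ∨ (u ∈ Y ∧ v ∈ X))
    (hwX : fmeas w X = 1 / 2) (hwY : fmeas w Y = 1 / 2)
    (hallX : ∀ A : Finset V, A ⊆ X → fmeas w A ≤ fmeas w (nbhd G' A)) :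
    ∃ f : V → V → ℝ,
      (∀ u v, 0 ≤ f u v) ∧
      (∀ u v, f u v = f v u) ∧
      (∀ u v, ¬ G'.Adj u v → f u v = 0) ∧
      (∀ v, ∑ u, f v u = w v) := by
  have hsides : ∀ u v, G'.Adj u v → (u ∈ X ↔ v ∈ Y) := fun u v h => by
    have := Finset.disjoint_left.1 hXY
    rcases hbip u v h with ⟨hu, hv⟩ | ⟨hu, hv⟩ <;> grind
  have hcont : Continuous fun g : V → V → ℝ => ∑ x ∈ X, rowSum g x := by
    simp only [rowSum_apply]
    fun_prop
  obtain ⟨f, hf, hmax⟩ := (G'.isCompact_fractionalSubmatchings w).exists_isMaxOn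
    ⟨0, G'.edgeWeights.zero_mem, le_rfl, by rw [map_zero]; exact hw0⟩ hcont.continuousOn
  have hX := rowSum_eq_of_isMaxOn hw0 hsides hallX hf hmax
  have hdeg : ∑ x ∈ X, rowSum f x = ∑ y ∈ Y, rowSum f y :=
    sum_rowSum_eq_sum_rowSum hf.1.1
      (fun x hx y hxy => (hsides x y (adj_of_mem_edgeWeights hf.1 hxy)).1 hx)
      (fun y hy x hyx => (hsides x y (adj_of_mem_edgeWeights hf.1 hyx).symm).2 hy)
  have hY : ∀ y ∈ Y, rowSum f y = w y := by
    refine (Finset.sum_eq_sum_iff_of_le fun y _ => hf.2.2 y).1 ?_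
    rw [← hdeg, Finset.sum_congr rfl hX]
    exact hwX.trans hwY.symm
  refine ⟨f, hf.2.1, hf.1.1, hf.1.2, fun v => ?_⟩
  rcases Finset.mem_union.1 (hcover ▸ Finset.mem_univ v) with hv | hv
  exacts [hX v hv, hY v hv]

theorem stmt_12 {V : Type*} [Fintype V] [DecidableEq V] (G' : SimpleGraph V) (w : V → ℝ)
    (hw0 : ∀ v, 0 ≤ w v)
    (X Y : Finset V) (hXY : Disjoint X Y) (hcover : X ∪ Y = Finset.univ)
    (hbip : ∀ u v, G'.Adj u v → (u ∈ X ∧ v ∈ Y) ∨ (u ∈ Y ∧ v ∈ X))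
    (hwX : fmeas w X = 1 / 2) (hwY : fmeas w Y = 1 / 2)
    (hallX : ∀ A : Finset V, A ⊆ X → fmeas w A ≤ fmeas w (nbhd G' A))
    (hallY : ∀ B : Finset V, B ⊆ Y → fmeas w B ≤ fmeas w (nbhd G' B)) :
    ∃ f : V → V → ℝ,
      (∀ u v, 0 ≤ f u v) ∧
      (∀ u v, f u v = f v u) ∧
      (∀ u v, ¬ G'.Adj u v → f u v = 0) ∧
      (∀ v, ∑ u, f v u = w v) :=
  stmt_12_general G' w hw0 X Y hXY hcover hbip hwX hwY hallX
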